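/- arXiv:0709.4018 — 3 statements merged into one kernel-verified Lean document; each statement's English description precedes it below -/
import Mathlib

section
/- Let X be a normal topological space and let {U_0', …, U_n'} be an open cover of X. Then there exists an infinite sequence of open sets (U_k)_{k=0}^∞ in X such that: (i) U_k = U_k' for k ≤ n; (ii) for every k > n, U_k is a disjoint union V_0 ∪ … ∪ V_n of open sets with V_i ⊆ U_i' for each 0 ≤ i ≤ n; and (iii) the family {U_k}_{k=0}^∞ is an (n+1)-cover of X, i.e., any n+1 distinct members of the family cover X. -/
/-!
The members `U_k`, `k > n`, are built recursively. If `U_0, …, U_{k-1}` is an `(n+1)`-cover,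
then the closed sets `F_T = X \ ⋃_{j ∈ T} U_j`, for `T` an `n`-element set of indices, are
pairwise disjoint (two distinct `T` together contain `n + 1` indices), and `F_T ⊆ U_j` whenever
`j ∉ T`; in particular `F_T ⊆ U'_i` for some `i ≤ n`. Grouping the finitely many `F_T` by
such an `i` and separating the groups in the normal space by disjoint open sets `V_i ⊆ U'_i`,
the set `U_k = ⋃ V_i` contains every `F_T`, so `U_0, …, U_k` is again an `(n+1)`-cover.
-/

open Set Function

open Finset in
lemma exists_fin_notMem_of_card_le {n : ℕ} {T : Finset ℕ} (hT : T.card ≤ n) :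
    ∃ i : Fin (n + 1), (i : ℕ) ∉ T := by
  obtain ⟨e, he, heT⟩ := exists_mem_notMem_of_card_lt_card (s := T) (t := range (n + 1))
    (by simpa [Nat.lt_succ_iff])
  exact ⟨⟨e, mem_range.1 he⟩, heT⟩

lemma Finset.lt_card_union_of_ne {α : Type*} [DecidableEq α] {n : ℕ} {T T' : Finset α}
    (hT : T.card = n) (hT' : T'.card = n) (hne : T ≠ T') : n < (T ∪ T').card := by
  by_contra! h
  exact hne <| (eq_of_subset_of_card_le subset_union_left (by omega)).trans
    (eq_of_subset_of_card_le subset_union_right (by omega)).symm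

section Separation

variable {X : Type*} [TopologicalSpace X] [NormalSpace X] {ι : Type*} [Finite ι]

lemma exists_isOpen_pairwise_disjoint_between {C O : ι → Set X} (hC : ∀ i, IsClosed (C i))
    (hCd : Pairwise (Disjoint on C)) (hO : ∀ i, IsOpen (O i)) (hCO : ∀ i, C i ⊆ O i) :
    ∃ V : ι → Set X, (∀ i, IsOpen (V i)) ∧ Pairwise (Disjoint on V) ∧
      (∀ i, C i ⊆ V i) ∧ ∀ i, V i ⊆ O i := by
  have hsep : ∀ i j, ∃ A B : Set X, IsOpen A ∧ IsOpen B ∧ C i ⊆ A ∧ C j ⊆ B ∧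
      (i ≠ j → Disjoint A B) := by
    intro i j
    by_cases hij : i = j
    · exact ⟨univ, univ, isOpen_univ, isOpen_univ, subset_univ _, subset_univ _,
        fun h => absurd hij h⟩
    · obtain ⟨A, B, hA, hB, hCA, hCB, hAB⟩ := normal_separation (hC i) (hC j) (hCd hij)
      exact ⟨A, B, hA, hB, hCA, hCB, fun _ => hAB⟩
  choose A B hA hB hCA hCB hAB using hsep
  refine ⟨fun i => O i ∩ ⋂ j, A i j ∩ B j i, fun i => ?_, fun i j hij => ?_,
    fun i => subset_inter (hCO i) (subset_iInter fun j => subset_inter (hCA i j) (hCB j i)),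
    fun i => inter_subset_left⟩
  · exact (hO i).inter (isOpen_iInter_of_finite fun j => (hA i j).inter (hB j i))
  · exact (hAB i j hij).mono
      (inter_subset_right.trans ((iInter_subset _ j).trans inter_subset_left))
      (inter_subset_right.trans ((iInter_subset _ i).trans inter_subset_right))

lemma exists_isOpen_pairwise_disjoint_biUnion_subset {τ : Type*} {O : ι → Set X}
    (hO : ∀ i, IsOpen (O i)) {S : Finset τ} {F : τ → Set X} (hF : ∀ t ∈ S, IsClosed (F t))
    (hFd : (S : Set τ).PairwiseDisjoint F) (hFO : ∀ t ∈ S, ∃ i, F t ⊆ O i) :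
    ∃ V : ι → Set X, (∀ i, IsOpen (V i)) ∧ Pairwise (Disjoint on V) ∧
      (∀ i, V i ⊆ O i) ∧ ⋃ t ∈ S, F t ⊆ ⋃ i, V i := by
  choose φ hφ using fun t : S => hFO t t.2
  set C : ι → Set X := fun i => ⋃ t ∈ {t : S | φ t = i}, F t
  have hC : ∀ i, IsClosed (C i) :=
    fun i => (toFinite _).isClosed_biUnion fun t _ => hF t t.2
  have hCd : Pairwise (Disjoint on C) := by
    intro i j hij
    simp only [onFun, C, disjoint_iUnion₂_left, disjoint_iUnion₂_right, mem_ofPred_eq]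
    rintro t rfl t' rfl
    exact hFd t'.2 t.2 fun h => hij (congrArg φ (Subtype.ext h))
  have hCO : ∀ i, C i ⊆ O i := fun i => iUnion₂_subset fun t ht => ht ▸ hφ t
  obtain ⟨V, hV, hVd, hCV, hVO⟩ := exists_isOpen_pairwise_disjoint_between hC hCd hO hCO
  refine ⟨V, hV, hVd, hVO, iUnion₂_subset fun t ht => ?_⟩
  have hFC : F t ⊆ C (φ ⟨t, ht⟩) :=
    subset_biUnion_of_mem (u := fun s : S => F s) (x := ⟨t, ht⟩) rfl
  exact (hFC.trans (hCV _)).trans (subset_iUnion V _)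

end Separation

section KCover

variable {X ι : Type*}

def IsKCoverOn (m : ℕ) (W : ι → Set X) (S : Finset ι) : Prop :=
  ∀ s ⊆ S, s.card = m → ⋃ j ∈ s, W j = univ

variable {m n : ℕ} {W : ι → Set X} {S T T' : Finset ι}

lemma IsKCoverOn.biUnion_eq_univ (hW : IsKCoverOn m W S) {s : Finset ι} (hs : s ⊆ S)
    (hm : m ≤ s.card) : ⋃ j ∈ s, W j = univ := by
  obtain ⟨t, hts, ht⟩ := Finset.exists_subset_card_eq hm
  exact eq_univ_of_univ_subset <| hW t (hts.trans hs) ht ▸ biUnion_subset_biUnion_left hts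

lemma IsKCoverOn.compl_biUnion_subset [DecidableEq ι] (hW : IsKCoverOn (n + 1) W S)
    (hT : T ⊆ S) (hTn : T.card = n) {j : ι} (hj : j ∈ S) (hjT : j ∉ T) : (⋃ i ∈ T, W i)ᶜ ⊆ W j := by
  have hcov := hW (insert j T) (Finset.insert_subset hj hT) (by simp [hjT, hTn])
  rw [Finset.set_biUnion_insert, union_comm] at hcov
  exact compl_subset_iff_union.2 hcov

lemma IsKCoverOn.disjoint_compl_biUnion [DecidableEq ι] (hW : IsKCoverOn (n + 1) W S)
    (hT : T ⊆ S) (hT' : T' ⊆ S) (hTn : T.card = n) (hT'n : T'.card = n) (hne : T ≠ T') :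
    Disjoint (⋃ i ∈ T, W i)ᶜ (⋃ i ∈ T', W i)ᶜ := by
  have hcov := hW.biUnion_eq_univ (Finset.union_subset hT hT')
    (Finset.lt_card_union_of_ne hTn hT'n hne)
  rw [Finset.set_biUnion_union, union_comm] at hcov
  exact disjoint_compl_left_iff_subset.2 (compl_subset_iff_union.2 hcov)

end KCover

section Extension

variable {X : Type*} [TopologicalSpace X]

def IsDisjointOpenUnionUnder {ι : Type*} (U' : ι → Set X) (U : Set X) : Prop :=
  ∃ V : ι → Set X, (∀ i, IsOpen (V i)) ∧ Pairwise (Disjoint on V) ∧ (∀ i, V i ⊆ U' i) ∧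
    U = ⋃ i, V i

def IsCoverExtension {ι : Type*} (U' : ι → Set X) (n : ℕ) (W : ℕ → Set X) (S : Finset ℕ)
    (U : Set X) : Prop :=
  IsDisjointOpenUnionUnder U' U ∧ ∀ T ⊆ S, T.card = n → U ∪ ⋃ j ∈ T, W j = univ

variable {ι : Type*} {U' : ι → Set X} {n : ℕ} {W W' : ℕ → Set X} {S : Finset ℕ} {U : Set X}

lemma IsDisjointOpenUnionUnder.isOpen (hU : IsDisjointOpenUnionUnder U' U) : IsOpen U := by
  obtain ⟨V, hV, -, -, rfl⟩ := hU
  exact isOpen_iUnion hV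

lemma isCoverExtension_congr (hWW' : ∀ j ∈ S, W j = W' j) :
    IsCoverExtension U' n W S U ↔ IsCoverExtension U' n W' S U := by
  refine and_congr_right' (forall₂_congr fun T hT => imp_congr_right fun _ => ?_)
  rw [iUnion₂_congr fun j hj => hWW' j (hT hj)]

theorem exists_isCoverExtension [NormalSpace X] {U' : Fin (n + 1) → Set X}
    (hU' : ∀ i, IsOpen (U' i)) (hS : Finset.range (n + 1) ⊆ S) (hW : ∀ j ∈ S, IsOpen (W j))
    (hWU' : ∀ i : Fin (n + 1), W i = U' i) (hcov : IsKCoverOn (n + 1) W S) :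
    ∃ U, IsCoverExtension U' n W S U := by
  have hF : ∀ T ∈ S.powersetCard n, IsClosed (⋃ j ∈ T, W j)ᶜ := fun T hT =>
    (isOpen_biUnion fun j hj => hW j ((Finset.mem_powersetCard.1 hT).1 hj)).isClosed_compl
  have hFd :
      (S.powersetCard n : Set (Finset ℕ)).PairwiseDisjoint fun T => (⋃ j ∈ T, W j)ᶜ := by
    intro T hT T' hT' hne
    rw [Finset.mem_coe, Finset.mem_powersetCard] at hT hT'
    exact hcov.disjoint_compl_biUnion hT.1 hT'.1 hT.2 hT'.2 hne
  have hFU' : ∀ T ∈ S.powersetCard n, ∃ i, (⋃ j ∈ T, W j)ᶜ ⊆ U' i := by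
    intro T hT
    rw [Finset.mem_powersetCard] at hT
    obtain ⟨i, hiT⟩ := exists_fin_notMem_of_card_le hT.2.le
    exact ⟨i, hWU' i ▸ hcov.compl_biUnion_subset hT.1 hT.2 (hS (Finset.mem_range.2 i.2)) hiT⟩
  obtain ⟨V, hV, hVd, hVU', hFV⟩ :=
    exists_isOpen_pairwise_disjoint_biUnion_subset hU' hF hFd hFU'
  refine ⟨⋃ i, V i, ⟨V, hV, hVd, hVU', rfl⟩, fun T hT hTn => ?_⟩
  have hTF : (⋃ j ∈ T, W j)ᶜ ⊆ ⋃ i, V i :=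
    (subset_biUnion_of_mem (u := fun T => (⋃ j ∈ T, W j)ᶜ)
      (Finset.mem_powersetCard.2 ⟨hT, hTn⟩)).trans hFV
  rw [union_comm]
  exact compl_subset_iff_union.1 hTF

end Extension

lemma isKCoverOn_range {X : Type*} {n m : ℕ} {W : ℕ → Set X}
    (hbase : ⋃ j ∈ Finset.range (n + 1), W j = univ)
    (hstep : ∀ k < m, n < k → ∀ T ⊆ Finset.range k, T.card = n → W k ∪ ⋃ j ∈ T, W j = univ) :
    IsKCoverOn (n + 1) W (Finset.range m) := by
  induction m with
  | zero => simp [IsKCoverOn]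
  | succ m ih =>
    intro s hs hsn
    by_cases hms : m ∈ s
    · rcases le_or_gt m n with hmn | hmn
      · have hs' : s ⊆ Finset.range (n + 1) := hs.trans (Finset.range_subset_range.2 (by omega))
        rw [Finset.eq_of_subset_of_card_le hs' (by simp [hsn])]
        exact hbase
      · rw [Finset.range_add_one, Finset.subset_insert_iff] at hs
        rw [← Finset.insert_erase hms, Finset.set_biUnion_insert]
        exact hstep m m.lt_add_one hmn _ hs (by simp [hms, hsn])
    · rw [Finset.range_add_one, Finset.subset_insert_iff_of_notMem hms] at hs
      exact ih (fun k hk => hstep k (by omega)) s hs hsn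

section Construction

variable {X : Type*} [TopologicalSpace X] {n : ℕ} (U' : Fin (n + 1) → Set X)

/-- Truncating the sequence to `range k` makes the recursion well founded and does not change
which extensions are admissible (`isCoverExtension_congr`). -/
noncomputable def extendCover : ℕ → Set X
  | k =>
    if hk : k ≤ n then U' ⟨k, Nat.lt_succ_of_le hk⟩
    else Classical.epsilon <| IsCoverExtension U' n
      (fun j => if j < k then extendCover j else ∅) (Finset.range k)

variable {U'}

lemma extendCover_of_le {k : ℕ} (hk : k ≤ n) :
    extendCover U' k = U' ⟨k, Nat.lt_succ_of_le hk⟩ := by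
  rw [extendCover, dif_pos hk]

lemma extendCover_val (i : Fin (n + 1)) : extendCover U' i = U' i :=
  extendCover_of_le i.is_le

lemma isCoverExtension_extendCover_of_exists {k : ℕ} (hk : n < k)
    (h : ∃ U, IsCoverExtension U' n (extendCover U') (Finset.range k) U) :
    IsCoverExtension U' n (extendCover U') (Finset.range k) (extendCover U' k) := by
  have hrestrict : ∀ j ∈ Finset.range k,
      (if j < k then extendCover U' j else ∅) = extendCover U' j :=
    fun j hj => if_pos (Finset.mem_range.1 hj)
  rw [extendCover, dif_neg hk.not_ge, ← isCoverExtension_congr hrestrict]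
  simp only [← isCoverExtension_congr hrestrict] at h
  exact Classical.epsilon_spec h

lemma isOpen_extendCover (hU' : ∀ i, IsOpen (U' i)) {k : ℕ}
    (hk : n < k → IsCoverExtension U' n (extendCover U') (Finset.range k) (extendCover U' k)) :
    IsOpen (extendCover U' k) := by
  rcases le_or_gt k n with hkn | hkn
  · rw [extendCover_of_le hkn]
    exact hU' _
  · exact (hk hkn).1.isOpen

lemma biUnion_range_extendCover_eq_univ (hcover : ⋃ i, U' i = univ) :
    ⋃ j ∈ Finset.range (n + 1), extendCover U' j = univ := by
  refine eq_univ_of_univ_subset (hcover ▸ iUnion_subset fun i => ?_)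
  rw [← extendCover_val (U' := U')]
  exact subset_biUnion_of_mem (u := extendCover U') (Finset.mem_range.2 i.2)

lemma isCoverExtension_extendCover [NormalSpace X] (hU' : ∀ i, IsOpen (U' i))
    (hcover : ⋃ i, U' i = univ) {k : ℕ} (hk : n < k) :
    IsCoverExtension U' n (extendCover U') (Finset.range k) (extendCover U' k) := by
  induction k using Nat.strong_induction_on with
  | _ k ih =>
    have hopen_lt : ∀ j ∈ Finset.range k, IsOpen (extendCover U' j) :=
      fun j hj => isOpen_extendCover hU' (ih j (Finset.mem_range.1 hj))
    have hkcover : IsKCoverOn (n + 1) (extendCover U') (Finset.range k) :=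
      isKCoverOn_range (biUnion_range_extendCover_eq_univ hcover) fun j hj hnj => (ih j hj hnj).2
    exact isCoverExtension_extendCover_of_exists hk <| exists_isCoverExtension hU'
      (Finset.range_subset_range.2 hk) hopen_lt extendCover_val hkcover

end Construction

/-- Theorem 2.5 (first part): a finite open cover `U'₀, …, U'ₙ` of a normal space `X`
extends to an infinite open `(n+1)`-cover `(U_k)` of `X` with `U_k = U'_k` for `k ≤ n`,
where each `U_k` with `k > n` is a disjoint union `V₀ ∪ ⋯ ∪ Vₙ` of open sets with
`V_i ⊆ U'_i`. -/
theorem exists_infinite_nSuccCover_extension {X : Type*} [TopologicalSpace X] [NormalSpace X]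
    (n : ℕ) (U' : Fin (n + 1) → Set X)
    (hopen : ∀ i, IsOpen (U' i)) (hcover : ⋃ i, U' i = univ) :
    ∃ U : ℕ → Set X,
      (∀ k, IsOpen (U k)) ∧
      (∀ k : ℕ, ∀ hk : k ≤ n, U k = U' ⟨k, Nat.lt_succ_of_le hk⟩) ∧
      (∀ k : ℕ, n < k → ∃ V : Fin (n + 1) → Set X,
        (∀ i, IsOpen (V i)) ∧ Pairwise (Function.onFun Disjoint V) ∧
        (∀ i, V i ⊆ U' i) ∧ U k = ⋃ i, V i) ∧
      (∀ s : Finset ℕ, s.card = n + 1 → ⋃ k ∈ s, U k = univ) := by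
  have hext : ∀ k, n < k →
      IsCoverExtension U' n (extendCover U') (Finset.range k) (extendCover U' k) :=
    fun k => isCoverExtension_extendCover hopen hcover
  refine ⟨extendCover U', fun k => isOpen_extendCover hopen (hext k),
    fun k => extendCover_of_le, fun k hk => (hext k hk).1, fun s hs => ?_⟩
  have hkcover : IsKCoverOn (n + 1) (extendCover U') (Finset.range (s.sup id + 1)) :=
    isKCoverOn_range (biUnion_range_extendCover_eq_univ hcover) fun k _ hk => (hext k hk).2
  exact hkcover s (Finset.subset_range_sup_succ s) hs
end

section
/- Let X be a path-connected normal topological space and let {U_0', …, U_n'} be an open cover of X by X-contractible sets. Then there exists an infinite open (n+1)-cover (U_k)_{k=0}^∞ of X (any n+1 distinct members cover X) with U_k = U_k' for k ≤ n, such that every U_k is X-contractible; moreover, for each k > n, U_k is a disjoint union of open sets V_0 ∪ … ∪ V_n with V_i ⊆ U_i'. -/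
/-!
Take a partition of unity `f₀, …, fₙ` subordinate to `U'` and distinct levels
`0 < t_k < 1/(n+1)` for `k > n`, and let `U_k` be the set of points where no `f_i` takes the
value `t_k`. Since the `f_i` sum to one, such a point has some `f_i > t_k`, so `U_k` is the
disjoint union of the open sets `V_i` where `i` is the first such index; `V_i ⊆ U'_i` is
`X`-contractible, and homotopies to a common point glue across the pieces. If a point `x` missed
`n + 1` of the sets, each missed `U'_k` would force `f_k x = 0` and each missed `U_k` would make
`t_k` a value of some `f_i x`, while the largest `f_i x ≥ 1/(n+1)` is neither: that needs more
than `n + 1` indices `i`.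
-/

open Set

/-- A subset `U` of a topological space `X` is `X`-contractible if the inclusion
`U ↪ X` is nullhomotopic (i.e. `U` can be contracted to a point within `X`). -/
def ContractibleIn {X : Type*} [TopologicalSpace X] (U : Set X) : Prop :=
  ContinuousMap.Nullhomotopic (⟨fun x => (x : X), continuous_subtype_val⟩ : C(U, X))

namespace ContinuousMap

variable {Y Z : Type*} [TopologicalSpace Y] [TopologicalSpace Z]

theorem Nullhomotopic.homotopic_const [PathConnectedSpace Z] {f : C(Y, Z)}
    (hf : f.Nullhomotopic) (z : Z) : f.Homotopic (const Y z) := by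
  obtain ⟨z', hz'⟩ := hf
  rcases isEmpty_or_nonempty Y with _ | _
  · rw [Subsingleton.elim f (const Y z)]
  · exact hz'.trans (homotopic_const_iff.2 (PathConnectedSpace.joined z' z))

theorem Homotopic.of_isOpen_cover_of_pairwise_disjoint {ι : Type*} {S : ι → Set Y}
    (hSo : ∀ i, IsOpen (S i)) (hSd : Pairwise (Function.onFun Disjoint S))
    (hScov : ⋃ i, S i = univ) {f g : C(Y, Z)}
    (h : ∀ i, (f.restrict (S i)).Homotopic (g.restrict (S i))) : f.Homotopic g := by
  have H := fun i => (h i).some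
  let T : ι → Set (unitInterval × Y) := fun i => Prod.snd ⁻¹' S i
  let φ : ∀ i, C(T i, Z) := fun i =>
    (H i).toContinuousMap.comp ⟨fun q => (q.1.1, ⟨q.1.2, q.2⟩), by fun_prop⟩
  have hφ : ∀ i j q (hi : q ∈ T i) (hj : q ∈ T j), φ i ⟨q, hi⟩ = φ j ⟨q, hj⟩ := by
    intro i j q hi hj
    obtain rfl : i = j := hSd.eq (not_disjoint_iff.2 ⟨q.2, hi, hj⟩)
    rfl
  have hmem (y : Y) : ∃ i, y ∈ S i := mem_iUnion.1 (hScov ▸ mem_univ y)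
  have hT (q : unitInterval × Y) : ∃ i, T i ∈ nhds q := by
    obtain ⟨i, hi⟩ := hmem q.2
    exact ⟨i, ((hSo i).preimage continuous_snd).mem_nhds hi⟩
  refine ⟨⟨liftCover T φ hφ hT, fun y => ?_, fun y => ?_⟩⟩
  · obtain ⟨i, hi⟩ := hmem y
    exact (liftCover_coe (i := i) ⟨(0, y), hi⟩).trans ((H i).apply_zero ⟨y, hi⟩)
  · obtain ⟨i, hi⟩ := hmem y
    exact (liftCover_coe (i := i) ⟨(1, y), hi⟩).trans ((H i).apply_one ⟨y, hi⟩)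

end ContinuousMap

namespace ContractibleIn

variable {X : Type*} [TopologicalSpace X]

theorem mono {U V : Set X} (h : ContractibleIn U) (hVU : V ⊆ U) :
    ContractibleIn V :=
  h.comp_left ⟨inclusion hVU, continuous_inclusion hVU⟩

theorem iUnion_of_pairwise_disjoint [PathConnectedSpace X] {ι : Type*} {V : ι → Set X}
    (hVo : ∀ i, IsOpen (V i)) (hVd : Pairwise (Function.onFun Disjoint V))
    (hV : ∀ i, ContractibleIn (V i)) : ContractibleIn (⋃ i, V i) := by
  obtain ⟨p⟩ := (inferInstance : Nonempty X)
  let S (i : ι) : Set (⋃ i, V i) := (↑) ⁻¹' V i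
  refine ⟨p, ContinuousMap.Homotopic.of_isOpen_cover_of_pairwise_disjoint (S := S)
    (fun i => (hVo i).preimage continuous_subtype_val) (fun i j hij => (hVd hij).preimage _)
    (by rw [← preimage_iUnion, Subtype.coe_preimage_self]) fun i => ?_⟩
  let r : C(S i, V i) := ⟨fun x => ⟨x.1.1, x.2⟩, by fun_prop⟩
  exact ((hV i).comp_left r).homotopic_const p

end ContractibleIn

namespace Finset

theorem exists_inv_card_le_of_sum_eq_one {ι : Type*} [Fintype ι] {a : ι → ℝ}
    (hsum : ∑ i, a i = 1) : ∃ i, (Fintype.card ι : ℝ)⁻¹ ≤ a i := by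
  have hne : (univ : Finset ι).Nonempty := nonempty_of_sum_ne_zero (hsum ▸ one_ne_zero)
  have hcard : (Fintype.card ι : ℝ) ≠ 0 := by simpa [← card_univ] using hne.ne_empty
  obtain ⟨i, -, hi⟩ : ∃ i ∈ univ, (Fintype.card ι : ℝ)⁻¹ ≤ a i := by
    refine exists_le_of_sum_le hne ?_
    rw [hsum, sum_const, card_univ, nsmul_eq_mul, mul_inv_cancel₀ hcard]
  exact ⟨i, hi⟩

theorem card_filter_eq_zero_add_card_lt {ι : Type*} [Fintype ι] {a : ι → ℝ}
    (hsum : ∑ i, a i = 1) {L : Finset ℝ}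
    (hL : ∀ t ∈ L, 0 < t ∧ t < (Fintype.card ι : ℝ)⁻¹ ∧ ∃ i, a i = t) :
    #{i | a i = 0} + #L < Fintype.card ι := by
  classical
  obtain ⟨i₀, hi₀⟩ := exists_inv_card_le_of_sum_eq_one hsum
  have hcard : 0 < (Fintype.card ι : ℝ) := by simpa using Fintype.card_pos_iff.2 ⟨i₀⟩
  let Z : Finset ι := {i | a i = 0}
  let A : Finset ι := {i | a i ∈ L}
  have hLA : #L ≤ #A :=
    card_le_card_of_surjOn a fun t ht => by
      obtain ⟨i, rfl⟩ := (hL t ht).2.2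
      exact ⟨i, by simpa [A] using ht, rfl⟩
  have hZA : Disjoint Z A := disjoint_filter.2 fun i _ h0 hi => (hL _ hi).1.ne' h0
  have hi₀ZA : i₀ ∉ Z ∪ A := by
    simp only [Z, A, mem_union, mem_filter, mem_univ, true_and, not_or]
    exact ⟨((inv_pos.2 hcard).trans_le hi₀).ne', fun h => ((hL _ h).2.1.trans_le hi₀).false⟩
  calc #Z + #L ≤ #(Z ∪ A) := by rw [card_union_of_disjoint hZA]; omega
    _ < Fintype.card ι := card_lt_univ_of_notMem hi₀ZA

end Finset

section Levels

variable {X ι : Type*}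

def levelPiece [LT ι] (f : ι → X → ℝ) (t : ℝ) (i : ι) : Set X :=
  {x | (∀ j, f j x ≠ t) ∧ t < f i x ∧ ∀ j < i, f j x < t}

section LinearOrder

variable [LinearOrder ι] {f : ι → X → ℝ} {t : ℝ}

theorem isOpen_levelPiece [TopologicalSpace X] [Finite ι] (hf : ∀ i, Continuous (f i)) (i : ι) :
    IsOpen (levelPiece f t i) := by
  have h : levelPiece f t i =
      (⋂ j, {x | f j x ≠ t}) ∩
        ({x | t < f i x} ∩ ⋂ j ∈ {j | j < i}, {x | f j x < t}) := by
    ext x; simp [levelPiece]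
  rw [h]
  exact (isOpen_iInter_of_finite fun j => isOpen_ne_fun (hf j) continuous_const).inter <|
    (isOpen_lt continuous_const (hf i)).inter <|
      (Set.toFinite {j | j < i}).isOpen_biInter fun j _ => isOpen_lt (hf j) continuous_const

theorem pairwise_disjoint_levelPiece : Pairwise (Function.onFun Disjoint (levelPiece f t)) := by
  intro i j hij
  refine Set.disjoint_left.2 fun x hi hj => ?_
  rcases hij.lt_or_gt with h | h
  · exact (hj.2.2 i h).not_gt hi.2.1
  · exact (hi.2.2 j h).not_gt hj.2.1

theorem iUnion_levelPiece [Finite ι] :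
    ⋃ i, levelPiece f t i = {x | (∀ j, f j x ≠ t) ∧ ∃ i, t < f i x} := by
  ext x
  simp only [mem_iUnion, levelPiece, mem_ofPred_eq]
  constructor
  · rintro ⟨i, hne, hi, -⟩
    exact ⟨hne, i, hi⟩
  · rintro ⟨hne, hex⟩
    obtain ⟨i, hi, hmin⟩ := wellFounded_lt.has_min {i | t < f i x} hex
    exact ⟨i, hne, hi, fun j hj => (not_lt.1 fun h => hmin j h hj).lt_of_ne (hne j)⟩

end LinearOrder

def levelCover {n : ℕ} (U' : Fin (n + 1) → Set X) (f : Fin (n + 1) → X → ℝ)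
    (t : ℕ → ℝ) (k : ℕ) : Set X :=
  if hk : k ≤ n then U' ⟨k, Nat.lt_succ_of_le hk⟩ else {x | ∀ i, f i x ≠ t k}

section levelCover

variable {n : ℕ} {U' : Fin (n + 1) → Set X} {f : Fin (n + 1) → X → ℝ} {t : ℕ → ℝ}
  {k : ℕ}

theorem levelCover_of_le (hk : k ≤ n) : levelCover U' f t k = U' ⟨k, Nat.lt_succ_of_le hk⟩ :=
  dif_pos hk

theorem levelCover_of_lt (hk : n < k) : levelCover U' f t k = {x | ∀ i, f i x ≠ t k} :=
  dif_neg hk.not_ge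

theorem levelCover_eq_iUnion_levelPiece (hsum : ∀ x, ∑ i, f i x = 1) (hk : n < k)
    (ht : t k < ((n : ℝ) + 1)⁻¹) : levelCover U' f t k = ⋃ i, levelPiece f (t k) i := by
  rw [levelCover_of_lt hk, iUnion_levelPiece]
  refine (Set.ext fun x => (and_iff_left_of_imp fun _ => ?_).symm)
  obtain ⟨i, hi⟩ := Finset.exists_inv_card_le_of_sum_eq_one (hsum x)
  exact ⟨i, ht.trans_le (by simpa using hi)⟩

open Finset in
theorem iUnion_levelCover_eq_univ (hsum : ∀ x, ∑ i, f i x = 1)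
    (hsupp : ∀ i x, f i x ≠ 0 → x ∈ U' i)
    (ht : ∀ k, n < k → 0 < t k ∧ t k < ((n : ℝ) + 1)⁻¹) (htinj : InjOn t (Ioi n))
    {s : Finset ℕ} (hs : #s = n + 1) : ⋃ k ∈ s, levelCover U' f t k = univ := by
  refine eq_univ_of_forall fun x => ?_
  by_contra hx
  simp only [mem_iUnion, not_exists] at hx
  have hle : #(s.filter (· ≤ n)) ≤ #{i | f i x = 0} :=
    card_le_card_of_surjOn Fin.val fun k hk => by
      obtain ⟨hks, hkn⟩ := mem_filter.1 hk
      refine ⟨⟨k, Nat.lt_succ_of_le hkn⟩, mem_filter.2 ⟨mem_univ _, ?_⟩, rfl⟩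
      by_contra h
      exact hx k hks (levelCover_of_le hkn ▸ hsupp _ x h)
  have hgt : #(s.filter (¬ · ≤ n)) = #((s.filter (¬ · ≤ n)).image t) :=
    (card_image_of_injOn fun k hk l hl => htinj (not_le.1 (mem_filter.1 hk).2)
      (not_le.1 (mem_filter.1 hl).2)).symm
  have hlt := card_filter_eq_zero_add_card_lt (hsum x) (L := (s.filter (¬ · ≤ n)).image t) <| by
    intro _ h
    obtain ⟨k, hk, rfl⟩ := mem_image.1 h
    obtain ⟨hks, hkn⟩ := mem_filter.1 hk
    have hlevel : ∃ i, f i x = t k := by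
      simpa [levelCover_of_lt (not_le.1 hkn)] using hx k hks
    rw [Fintype.card_fin, Nat.cast_succ]
    exact ⟨(ht k (not_le.1 hkn)).1, (ht k (not_le.1 hkn)).2, hlevel⟩
  have := card_filter_add_card_filter_not (s := s) (· ≤ n)
  simp only [Fintype.card_fin] at hlt
  omega

end levelCover

end Levels

/-- Theorem 2.5 (contractible case): an open cover `U'₀, …, U'ₙ` of a path-connected
normal space `X` by `X`-contractible sets extends to an infinite open `(n+1)`-cover
`(U_k)` of `X` by `X`-contractible sets with `U_k = U'_k` for `k ≤ n`, where each `U_k`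
with `k > n` is a disjoint union `V₀ ∪ ⋯ ∪ Vₙ` of open sets with `V_i ⊆ U'_i`. -/
theorem exists_infinite_contractible_nSuccCover_extension
    {X : Type*} [TopologicalSpace X] [NormalSpace X] [PathConnectedSpace X]
    (n : ℕ) (U' : Fin (n + 1) → Set X)
    (hopen : ∀ i, IsOpen (U' i)) (hcover : ⋃ i, U' i = univ)
    (hcontr : ∀ i, ContractibleIn (U' i)) :
    ∃ U : ℕ → Set X,
      (∀ k, IsOpen (U k)) ∧
      (∀ k : ℕ, ∀ hk : k ≤ n, U k = U' ⟨k, Nat.lt_succ_of_le hk⟩) ∧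
      (∀ k, ContractibleIn (U k)) ∧
      (∀ k : ℕ, n < k → ∃ V : Fin (n + 1) → Set X,
        (∀ i, IsOpen (V i)) ∧ Pairwise (Function.onFun Disjoint V) ∧
        (∀ i, V i ⊆ U' i) ∧ U k = ⋃ i, V i) ∧
      (∀ s : Finset ℕ, s.card = n + 1 → ⋃ k ∈ s, U k = univ) := by
  obtain ⟨f, hf⟩ := PartitionOfUnity.exists_isSubordinate_of_locallyFinite isClosed_univ U'
    hopen (locallyFinite_of_finite U') hcover.ge
  have hsum (x : X) : ∑ i, f i x = 1 := by
    simpa [finsum_eq_sum_of_fintype] using f.sum_eq_one (mem_univ x)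
  have hsupp (i) (x : X) (h : f i x ≠ 0) : x ∈ U' i := hf i (subset_tsupport _ h)
  let t : ℕ → ℝ := fun k => ((k + 2 : ℕ) : ℝ)⁻¹
  have ht (k : ℕ) (hk : n < k) : 0 < t k ∧ t k < ((n : ℝ) + 1)⁻¹ := by
    refine ⟨by positivity, inv_strictAnti₀ (by positivity) ?_⟩
    exact_mod_cast (by omega : n + 1 < k + 2)
  have htinj : Function.Injective t :=
    inv_injective.comp (Nat.cast_injective.comp (add_left_injective 2))
  have hdecomp (k : ℕ) (hk : n < k) : ∃ V : Fin (n + 1) → Set X,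
      (∀ i, IsOpen (V i)) ∧ Pairwise (Function.onFun Disjoint V) ∧
      (∀ i, V i ⊆ U' i) ∧ levelCover U' (fun i => f i) t k = ⋃ i, V i :=
    ⟨levelPiece (fun i => f i) (t k), isOpen_levelPiece fun i => (f i).continuous,
      pairwise_disjoint_levelPiece, fun i x hx => hsupp i x ((ht k hk).1.trans hx.2.1).ne',
      levelCover_eq_iUnion_levelPiece hsum hk (ht k hk).2⟩
  refine ⟨levelCover U' (fun i => f i) t, fun k => ?_, fun k hk => levelCover_of_le hk,
    fun k => ?_, hdecomp, fun s hs => iUnion_levelCover_eq_univ hsum hsupp ht htinj.injOn hs⟩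
  all_goals rcases le_or_gt k n with hk | hk
  · exact levelCover_of_le hk ▸ hopen _
  · obtain ⟨V, hVo, -, -, hV⟩ := hdecomp k hk
    exact hV ▸ isOpen_iUnion hVo
  · exact levelCover_of_le hk ▸ hcontr _
  · obtain ⟨V, hVo, hVd, hVU, hV⟩ := hdecomp k hk
    exact hV ▸ .iUnion_of_pairwise_disjoint hVo hVd fun i => (hcontr i).mono (hVU i)
end

section
/- Let X and Y be nonempty topological spaces with X path-connected and Y locally contractible, and let π : X × Y → Y be the projection onto the second factor. Then cat* π = cat X. -/
open Set Topology

/-- `cat X ≤ n` : `X` admits an open cover by `n + 1` `X`-contractible sets. -/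
def CatLE (X : Type*) [TopologicalSpace X] (n : ℕ) : Prop :=
  ∃ U : Fin (n + 1) → Set X,
    (∀ i, IsOpen (U i)) ∧ (∀ i, ContractibleIn (U i)) ∧ (⋃ i, U i) = univ

/-- The Lusternik–Schnirelmann category of `X`, as an element of `ℕ∞`
(`⊤` if no finite contractible cover exists). -/
noncomputable def LSCat (X : Type*) [TopologicalSpace X] : ℕ∞ :=
  sInf ((↑) '' {n : ℕ | CatLE X n})

/-- A family `U` of subsets of `X` is uniformly `f`-contractible if every `y ∈ Y` has a
neighborhood `V` such that each `U i ∩ f ⁻¹' V` is `X`-contractible. -/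
def UnifContractible {X Y : Type*} [TopologicalSpace X] [TopologicalSpace Y]
    (f : X → Y) {ι : Type*} (U : ι → Set X) : Prop :=
  ∀ y : Y, ∃ V ∈ 𝓝 y, ∀ i, ContractibleIn (U i ∩ f ⁻¹' V)

/-- `cat* f ≤ n` : `X` admits a uniformly `f`-contractible open cover by `n + 1` sets. -/
def CatStarLE {X Y : Type*} [TopologicalSpace X] [TopologicalSpace Y]
    (f : X → Y) (n : ℕ) : Prop :=
  ∃ U : Fin (n + 1) → Set X,
    (∀ i, IsOpen (U i)) ∧ (⋃ i, U i) = univ ∧ UnifContractible f U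

/-- The ∗-category of a map `f`, as an element of `ℕ∞`. -/
noncomputable def CatStar {X Y : Type*} [TopologicalSpace X] [TopologicalSpace Y]
    (f : X → Y) : ℕ∞ :=
  sInf ((↑) '' {n : ℕ | CatStarLE f n})

/-- `Y` is locally contractible: every neighborhood `V` of a point contains a
neighborhood `U` whose inclusion into `V` is nullhomotopic. -/
def LocallyContractibleSpace' (Y : Type*) [TopologicalSpace Y] : Prop :=
  ∀ y : Y, ∀ V ∈ 𝓝 y, ∃ U ∈ 𝓝 y, ∃ hUV : U ⊆ V,
    ContinuousMap.Nullhomotopic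
      (⟨Set.inclusion hUV, continuous_inclusion hUV⟩ : C(U, V))

/-!
A cover of `X × Y` that is uniformly contractible for the projection restricts, on a slice
`X × {y₀}`, to a contractible cover of `X`, since `X × {y₀}` is a retract of `X × Y`.
Conversely, a contractible cover `{Uᵢ}` of `X` pulls back to the cover `{Uᵢ × Y}`, and near
each `y` local contractibility supplies a `Y`-contractible neighborhood `W`, so that
`(Uᵢ × Y) ∩ π⁻¹ W = Uᵢ × W` is contractible as a product of contractible sets.
-/

open ContinuousMap

section ContractibleIn

variable {A B : Type*} [TopologicalSpace A] [TopologicalSpace B]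

theorem ContractibleIn.mono_s8 {s t : Set A} (hst : s ⊆ t) (ht : ContractibleIn t) :
    ContractibleIn s :=
  ht.comp_left (ContinuousMap.inclusion hst)

theorem ContractibleIn.preimage_of_leftInverse {f : C(A, B)} {g : C(B, A)}
    (hgf : Function.LeftInverse g f) {U : Set B} (hU : ContractibleIn U) :
    ContractibleIn (f ⁻¹' U) := by
  unfold ContractibleIn
  convert (hU.comp_left (f.restrictPreimage U)).comp_right g using 1
  ext x
  exact (hgf x).symm

theorem ContractibleIn.prod {s : Set A} {t : Set B} (hs : ContractibleIn s)
    (ht : ContractibleIn t) : ContractibleIn (s ×ˢ t) := by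
  obtain ⟨a, hs⟩ := hs
  obtain ⟨b, ht⟩ := ht
  exact Nullhomotopic.comp_left ⟨(a, b), hs.prodMap ht⟩
    (Homeomorph.Set.prod s t : C(s ×ˢ t, s × t))

end ContractibleIn

theorem LocallyContractibleSpace'.exists_mem_nhds_contractibleIn {Y : Type*}
    [TopologicalSpace Y] (hY : LocallyContractibleSpace' Y) (y : Y) :
    ∃ W ∈ 𝓝 y, ContractibleIn W := by
  obtain ⟨W, hW, _, hnull⟩ := hY y univ Filter.univ_mem
  exact ⟨W, hW, hnull.comp_right ⟨Subtype.val, continuous_subtype_val⟩⟩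

section Projection

variable {X Y : Type*} [TopologicalSpace X] [TopologicalSpace Y] {n : ℕ}

theorem catLE_of_catStarLE_snd [Nonempty Y] (h : CatStarLE (Prod.snd : X × Y → Y) n) :
    CatLE X n := by
  obtain ⟨U, hUopen, hUcover, hUnif⟩ := h
  obtain ⟨y₀⟩ := ‹Nonempty Y›
  obtain ⟨V, hV, hVcontr⟩ := hUnif y₀
  let slice : C(X, X × Y) := ⟨fun x => (x, y₀), Continuous.prodMk_left y₀⟩
  refine ⟨fun i => slice ⁻¹' U i, fun i => (hUopen i).preimage slice.continuous,
    fun i => ?_, ?_⟩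
  · have hy₀ : y₀ ∈ V := mem_of_mem_nhds hV
    have hsub : slice ⁻¹' U i ⊆ slice ⁻¹' (U i ∩ Prod.snd ⁻¹' V) :=
      fun _ hx => ⟨hx, hy₀⟩
    exact ((hVcontr i).preimage_of_leftInverse (g := .fst) fun _ => rfl).mono_s8 hsub
  · rw [iUnion_eq_univ_iff] at hUcover ⊢
    exact fun x => hUcover (x, y₀)

theorem catStarLE_snd_of_catLE (hY : ∀ y : Y, ∃ W ∈ 𝓝 y, ContractibleIn W)
    (h : CatLE X n) : CatStarLE (Prod.snd : X × Y → Y) n := by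
  obtain ⟨U, hUopen, hUcontr, hUcover⟩ := h
  refine ⟨fun i => Prod.fst ⁻¹' U i, fun i => (hUopen i).preimage continuous_fst, ?_,
    fun y => ?_⟩
  · rw [iUnion_eq_univ_iff] at hUcover ⊢
    exact fun p => hUcover p.1
  · obtain ⟨W, hW, hWcontr⟩ := hY y
    exact ⟨W, hW, fun i => (hUcontr i).prod hWcontr⟩

end Projection

theorem catStar_proj_eq_lsCat_general
    (X Y : Type*) [TopologicalSpace X] [TopologicalSpace Y]
    [Nonempty Y]
    (hY : LocallyContractibleSpace' Y) :
    CatStar (Prod.snd : X × Y → Y) = LSCat X := by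
  have hlevels : {n | CatStarLE (Prod.snd : X × Y → Y) n} = {n | CatLE X n} :=
    Set.ext fun _ => ⟨catLE_of_catStarLE_snd,
      catStarLE_snd_of_catLE hY.exists_mem_nhds_contractibleIn⟩
  rw [CatStar, LSCat, hlevels]

/-- For the projection `π : X × Y → Y` with `X` path-connected and `Y` locally
contractible (both nonempty), `cat* π = cat X`. -/
theorem catStar_proj_eq_lsCat
    (X Y : Type*) [TopologicalSpace X] [TopologicalSpace Y]
    [Nonempty X] [Nonempty Y] [PathConnectedSpace X]
    (hY : LocallyContractibleSpace' Y) :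
    CatStar (Prod.snd : X × Y → Y) = LSCat X :=
  catStar_proj_eq_lsCat_general X Y hY
end
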